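/- arXiv:2205.07462 — 5 statements merged into one kernel-verified Lean document; each statement's English description precedes it below -/
import Mathlib

section
/- Let (X, 𝓕) be a measurable space, μ a σ-finite measure on it, and 𝓕^fin = {A ∈ 𝓕 : μ(A) < ∞}. Let M : 𝓕^fin → ℂ be finitely additive (M(A ∪ B) = M(A) + M(B) for disjoint A, B ∈ 𝓕^fin) and satisfy M(A) = 0 whenever μ(A) = 0. Then the following are equivalent: (1) there exists h ∈ L²(X, μ; ℂ) such that M(A) = ∫_A h dμ for every A ∈ 𝓕^fin; (2) there exists a constant C < ∞ such that for every N ∈ ℕ and every family A₁,…,A_N of pairwise disjoint sets in 𝓕^fin with μ(A_n) > 0, one has Σ_{n=1}^N |M(A_n)|² / μ(A_n) ≤ C. -/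
/-!
If `M A = ∫_A h`, then `M A / √(μ A) = ⟪(μ A)^{-1/2} 𝟙_A, h⟫` in `L²`; the normalized indicators
of disjoint sets are orthonormal, so Bessel's inequality bounds the sums by `‖h‖²`.
Conversely, Cauchy–Schwarz turns the bound `C` into `|∑ cᵢ M(Aᵢ)|² ≤ C ∑ |cᵢ|² μ(Aᵢ)`, so
`∑ cᵢ 𝟙_{Aᵢ} ↦ ∑ cᵢ M(Aᵢ)` is a functional of norm at most `√C` on the dense subspace of simple
functions of `L²`. Its continuous extension is `f ↦ ⟪g, f⟫` by the Riesz representation theorem,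
and `h = conj g`.
-/

open MeasureTheory ComplexConjugate

attribute [local instance] Lp.simpleFunc.module Lp.simpleFunc.normedSpace
  Lp.simpleFunc.isBoundedSMul

namespace MeasureTheory

variable {X 𝕜 : Type*} [RCLike 𝕜]

/-- `M` as an operator-valued set function, so that Mathlib's `SimpleFunc.setToSimpleFunc` turns
it into `g ↦ ∑ c ∈ g.range, M (g ⁻¹' {c}) * c`, with linearity for free. -/
noncomputable def mulCLM (M : Set X → 𝕜) (A : Set X) : 𝕜 →L[ℝ] 𝕜 :=
  ContinuousLinearMap.mul ℝ 𝕜 (M A)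

@[simp]
theorem mulCLM_apply (M : Set X → 𝕜) (A : Set X) (z : 𝕜) : mulCLM M A z = M A * z := rfl

variable [MeasurableSpace X] {μ : Measure X}

theorem L2.norm_sq_eq_integral_norm_sq (f : Lp 𝕜 2 μ) : ‖f‖ ^ 2 = ∫ x, ‖f x‖ ^ 2 ∂μ := by
  rw [← @inner_self_eq_norm_sq 𝕜, L2.inner_def, ← integral_re (L2.integrable_inner f f)]
  simp_rw [inner_self_eq_norm_sq]

theorem Lp.simpleFunc.norm_sq_eq_integral_norm_sq (f : Lp.simpleFunc 𝕜 2 μ) :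
    ‖f‖ ^ 2 = ∫ x, ‖Lp.simpleFunc.toSimpleFunc f x‖ ^ 2 ∂μ := by
  rw [show ‖f‖ = ‖(f : Lp 𝕜 2 μ)‖ from rfl, L2.norm_sq_eq_integral_norm_sq]
  exact integral_congr_ae ((Lp.simpleFunc.toSimpleFunc_eq_toFun f).fun_comp (‖·‖ ^ 2)).symm

theorem Lp.simpleFunc.integrable_toSimpleFunc {E : Type*} [NormedAddCommGroup E]
    {p : ENNReal} (hp0 : p ≠ 0) (hp : p ≠ ⊤) (f : Lp.simpleFunc E p μ) :
    Integrable (Lp.simpleFunc.toSimpleFunc f) μ :=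
  (SimpleFunc.memLp_iff_integrable hp0 hp).mp (Lp.simpleFunc.memLp f)

theorem SimpleFunc.sum_norm_sq_mul_measureReal_le {E : Type*} [NormedAddCommGroup E]
    (g : SimpleFunc X E) (hg : Integrable (fun x ↦ ‖g x‖ ^ 2) μ) (s : Finset E) :
    ∑ c ∈ s, ‖c‖ ^ 2 * μ.real (g ⁻¹' {c}) ≤ ∫ x, ‖g x‖ ^ 2 ∂μ := by
  have hfiber : ∀ c ∈ s, ‖c‖ ^ 2 * μ.real (g ⁻¹' {c}) = ∫ x in g ⁻¹' {c}, ‖g x‖ ^ 2 ∂μ := by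
    intro c _
    rw [setIntegral_congr_fun (g.measurableSet_fiber c) fun x (hx : g x = c) ↦ by rw [hx],
      setIntegral_const, smul_eq_mul, mul_comm]
  rw [Finset.sum_congr rfl hfiber, ← integral_biUnion_finset s
    (fun c _ ↦ g.measurableSet_fiber c)
    (fun a _ b _ hab ↦ (Set.disjoint_singleton.mpr hab).preimage g) fun c _ ↦ hg.integrableOn]
  exact setIntegral_le_integral hg (.of_forall fun x ↦ sq_nonneg _)

theorem orthonormal_inv_sqrt_smul_indicatorConstLp {ι : Type*} {A : ι → Set X}
    (hA : ∀ i, MeasurableSet (A i)) (hfin : ∀ i, μ (A i) ≠ ⊤) (hpos : ∀ i, 0 < μ (A i))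
    (hdisj : Pairwise (Function.onFun Disjoint A)) :
    Orthonormal 𝕜 fun i ↦
      ((√(μ.real (A i)))⁻¹ : 𝕜) • indicatorConstLp 2 (hA i) (hfin i) (1 : 𝕜) := by
  classical
  rw [orthonormal_iff_ite]
  intro i j
  rw [inner_smul_left, inner_smul_right,
    L2.inner_indicatorConstLp_one_indicatorConstLp_one (hA i) (hA j) (hfin i) (hfin j)]
  split_ifs with hij
  · subst hij
    have : 0 < μ.real (A i) := ENNReal.toReal_pos (hpos i).ne' (hfin i)
    rw [Set.inter_self, map_inv₀, RCLike.conj_ofReal]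
    field_simp
    norm_cast
    rw [Real.sq_sqrt this.le, div_self this.ne']
  · simp [Set.disjoint_iff_inter_eq_empty.mp (hdisj hij)]

theorem sum_norm_setIntegral_sq_div_le {h : X → 𝕜} (hh : MemLp h 2 μ) {ι : Type*}
    (s : Finset ι) {A : ι → Set X} (hA : ∀ i, MeasurableSet (A i)) (hfin : ∀ i, μ (A i) ≠ ⊤)
    (hpos : ∀ i, 0 < μ (A i)) (hdisj : Pairwise (Function.onFun Disjoint A)) :
    ∑ i ∈ s, ‖∫ x in A i, h x ∂μ‖ ^ 2 / μ.real (A i) ≤ ‖hh.toLp h‖ ^ 2 := by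
  refine le_of_eq_of_le (Finset.sum_congr rfl fun i _ ↦ ?_)
    ((orthonormal_inv_sqrt_smul_indicatorConstLp hA hfin hpos hdisj).sum_inner_products_le
      (hh.toLp h))
  rw [inner_smul_left, L2.inner_indicatorConstLp_one,
    integral_congr_ae (ae_restrict_of_ae hh.coeFn_toLp), norm_mul, mul_pow, map_inv₀,
    RCLike.conj_ofReal, norm_inv, RCLike.norm_ofReal, abs_of_nonneg (Real.sqrt_nonneg _),
    inv_pow, Real.sq_sqrt measureReal_nonneg, inv_mul_eq_div]

theorem exists_memLp_two_setIntegral_eq (Λ : Lp 𝕜 2 μ →L[𝕜] 𝕜) :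
    ∃ h : X → 𝕜, MemLp h 2 μ ∧ ∀ (A : Set X) (hA : MeasurableSet A) (hfin : μ A ≠ ⊤),
      Λ (indicatorConstLp 2 hA hfin 1) = ∫ x in A, h x ∂μ := by
  set g := (InnerProductSpace.toDual 𝕜 (Lp 𝕜 2 μ)).symm Λ
  refine ⟨fun x ↦ conj (g x),
    (RCLike.conjCLE : 𝕜 ≃L[ℝ] 𝕜).toContinuousLinearMap.comp_memLp' (Lp.memLp g),
    fun A hA hfin ↦ ?_⟩
  rw [← InnerProductSpace.toDual_symm_apply, ← inner_conj_symm, L2.inner_indicatorConstLp_one,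
    integral_conj]

def SqVariationBoundedBy (μ : Measure X) (M : Set X → 𝕜) (C : ℝ) : Prop :=
  ∀ (N : ℕ) (A : Fin N → Set X),
    (∀ n, MeasurableSet (A n)) → (∀ n, μ (A n) < ⊤) → (∀ n, 0 < μ (A n)) →
    Pairwise (Function.onFun Disjoint A) →
    ∑ n, ‖M (A n)‖ ^ 2 / μ.real (A n) ≤ C

variable {M : Set X → 𝕜} {C : ℝ}

namespace SqVariationBoundedBy

theorem nonneg (hC : SqVariationBoundedBy μ M C) : 0 ≤ C := by
  simpa using hC 0 Fin.elim0 Fin.rec0 Fin.rec0 Fin.rec0 fun i ↦ i.elim0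

theorem sum_le {ι : Type*} (hC : SqVariationBoundedBy μ M C) (s : Finset ι) {A : ι → Set X}
    (hA : ∀ i, MeasurableSet (A i)) (hfin : ∀ i ∈ s, μ (A i) < ⊤)
    (hdisj : (s : Set ι).PairwiseDisjoint A) :
    ∑ i ∈ s, ‖M (A i)‖ ^ 2 / μ.real (A i) ≤ C := by
  classical
  -- null sets contribute `‖M (A i)‖ ^ 2 / 0 = 0`
  set t := s.filter fun i ↦ 0 < μ (A i)
  have hsum : ∑ i ∈ s, ‖M (A i)‖ ^ 2 / μ.real (A i) = ∑ i ∈ t, ‖M (A i)‖ ^ 2 / μ.real (A i) := by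
    refine (Finset.sum_filter_of_ne fun i _ hne ↦ ?_).symm
    refine pos_iff_ne_zero.mpr fun h0 ↦ hne ?_
    simp [Measure.real, h0]
  let e := t.equivFin.symm
  have he : ∀ n, (e n : ι) ∈ s ∧ 0 < μ (A (e n)) := fun n ↦ Finset.mem_filter.mp (e n).2
  calc ∑ i ∈ s, ‖M (A i)‖ ^ 2 / μ.real (A i)
      = ∑ n, ‖M (A (e n))‖ ^ 2 / μ.real (A (e n)) := by
        rw [hsum, ← Finset.sum_coe_sort t]
        exact (Fintype.sum_equiv e _ _ fun _ ↦ rfl).symm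
    _ ≤ C := hC _ _ (fun n ↦ hA _) (fun n ↦ hfin _ (he n).1) (fun n ↦ (he n).2)
        fun m n hmn ↦ hdisj (he m).1 (he n).1 fun h ↦ hmn (e.injective (Subtype.ext h))

theorem norm_sum_mul_sq_le {ι : Type*} (hac : ∀ A : Set X, MeasurableSet A → μ A = 0 → M A = 0)
    (hC : SqVariationBoundedBy μ M C) (s : Finset ι) {A : ι → Set X}
    (hA : ∀ i, MeasurableSet (A i)) (hfin : ∀ i ∈ s, μ (A i) < ⊤)
    (hdisj : (s : Set ι).PairwiseDisjoint A) (c : ι → 𝕜) :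
    ‖∑ i ∈ s, M (A i) * c i‖ ^ 2 ≤ C * ∑ i ∈ s, ‖c i‖ ^ 2 * μ.real (A i) := by
  have hterm : ∀ i ∈ s, (‖M (A i)‖ * ‖c i‖) ^ 2 ≤
      ‖M (A i)‖ ^ 2 / μ.real (A i) * (‖c i‖ ^ 2 * μ.real (A i)) := by
    intro i hi
    rcases eq_or_ne (μ (A i)) 0 with h0 | h0
    · simp [hac _ (hA i) h0]
    · have : μ.real (A i) ≠ 0 := ENNReal.toReal_ne_zero.mpr ⟨h0, (hfin i hi).ne⟩
      exact le_of_eq (by field_simp)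
  calc ‖∑ i ∈ s, M (A i) * c i‖ ^ 2
      ≤ (∑ i ∈ s, ‖M (A i)‖ * ‖c i‖) ^ 2 := by
        gcongr
        exact (norm_sum_le _ _).trans_eq (by simp_rw [norm_mul])
    _ ≤ (∑ i ∈ s, ‖M (A i)‖ ^ 2 / μ.real (A i)) * ∑ i ∈ s, ‖c i‖ ^ 2 * μ.real (A i) :=
        Finset.sum_sq_le_sum_mul_sum_of_sq_le_mul s
          (fun i _ ↦ div_nonneg (sq_nonneg _) measureReal_nonneg)
          (fun i _ ↦ mul_nonneg (sq_nonneg _) measureReal_nonneg) hterm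
    _ ≤ C * ∑ i ∈ s, ‖c i‖ ^ 2 * μ.real (A i) := by
        gcongr
        exact hC.sum_le s hA hfin hdisj

theorem norm_setToSimpleFunc_sq_le (hac : ∀ A : Set X, MeasurableSet A → μ A = 0 → M A = 0)
    (hC : SqVariationBoundedBy μ M C) (g : SimpleFunc X 𝕜) (hg : Integrable g μ) :
    ‖g.setToSimpleFunc (mulCLM M)‖ ^ 2 ≤ C * ∫ x, ‖g x‖ ^ 2 ∂μ := by
  classical
  have hg2 : MemLp g 2 μ := (SimpleFunc.memLp_iff_integrable (by norm_num) (by norm_num)).mpr hg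
  set s := g.range.filter (· ≠ 0)
  have hsum : g.setToSimpleFunc (mulCLM M) = ∑ c ∈ s, M (g ⁻¹' {c}) * c := by
    rw [SimpleFunc.setToSimpleFunc, Finset.sum_filter_of_ne fun c _ hc ↦ ?_]
    · rfl
    · rintro rfl
      simp at hc
  calc ‖g.setToSimpleFunc (mulCLM M)‖ ^ 2
      ≤ C * ∑ c ∈ s, ‖c‖ ^ 2 * μ.real (g ⁻¹' {c}) := by
        rw [hsum]
        exact hC.norm_sum_mul_sq_le hac s (fun c ↦ g.measurableSet_fiber c)
          (fun c hc ↦ g.measure_preimage_lt_top_of_integrable hg (Finset.mem_filter.mp hc).2)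
          (fun a _ b _ hab ↦ (Set.disjoint_singleton.mpr hab).preimage g) id
    _ ≤ C * ∫ x, ‖g x‖ ^ 2 ∂μ := by
        gcongr
        · exact hC.nonneg
        · exact g.sum_norm_sq_mul_measureReal_le
            ((memLp_two_iff_integrable_sq_norm hg2.1).mp hg2) s

end SqVariationBoundedBy

theorem finMeasAdditive_mulCLM
    (hadd : ∀ A B : Set X, MeasurableSet A → MeasurableSet B → μ A < ⊤ → μ B < ⊤ →
      Disjoint A B → M (A ∪ B) = M A + M B) :
    FinMeasAdditive μ (mulCLM M) := fun A B hA hB hμA hμB hAB ↦ by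
  ext
  simp [hadd A B hA hB hμA.lt_top hμB.lt_top hAB, add_mul]

theorem mulCLM_eq_zero_of_measure_eq_zero
    (hac : ∀ A : Set X, MeasurableSet A → μ A = 0 → M A = 0) (A : Set X) (hA : MeasurableSet A)
    (hA0 : μ A = 0) : mulCLM M A = 0 := by
  ext
  simp [hac A hA hA0]

noncomputable def simpleL2Functional (hadd : FinMeasAdditive μ (mulCLM M))
    (hac : ∀ A : Set X, MeasurableSet A → μ A = 0 → M A = 0) (hC : SqVariationBoundedBy μ M C) :
    Lp.simpleFunc 𝕜 2 μ →L[𝕜] 𝕜 :=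
  have hint := Lp.simpleFunc.integrable_toSimpleFunc (μ := μ) (E := 𝕜) two_ne_zero
    ENNReal.ofNat_ne_top
  LinearMap.mkContinuous
    { toFun f := (Lp.simpleFunc.toSimpleFunc f).setToSimpleFunc (mulCLM M)
      map_add' f g := by
        rw [← SimpleFunc.setToSimpleFunc_add _ hadd (hint f) (hint g)]
        exact SimpleFunc.setToSimpleFunc_congr _ (mulCLM_eq_zero_of_measure_eq_zero hac) hadd
          (hint _) (Lp.simpleFunc.add_toSimpleFunc f g)
      map_smul' c f := by
        rw [RingHom.id_apply, ← SimpleFunc.setToSimpleFunc_smul _ hadd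
          (fun c A z ↦ mul_left_comm (M A) c z) c (hint f)]
        exact SimpleFunc.setToSimpleFunc_congr _ (mulCLM_eq_zero_of_measure_eq_zero hac) hadd
          (hint _) (Lp.simpleFunc.smul_toSimpleFunc c f) }
    √C fun f ↦ by
      refine (pow_le_pow_iff_left₀ (norm_nonneg _) (by positivity) two_ne_zero).mp ?_
      rw [mul_pow, Real.sq_sqrt hC.nonneg, Lp.simpleFunc.norm_sq_eq_integral_norm_sq]
      exact hC.norm_setToSimpleFunc_sq_le hac _ (hint f)

theorem simpleL2Functional_indicatorConst (hadd : FinMeasAdditive μ (mulCLM M))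
    (hac : ∀ A : Set X, MeasurableSet A → μ A = 0 → M A = 0) (hC : SqVariationBoundedBy μ M C)
    {A : Set X} (hA : MeasurableSet A) (hfin : μ A ≠ ⊤) :
    simpleL2Functional hadd hac hC (Lp.simpleFunc.indicatorConst 2 hA hfin 1) = M A := by
  rw [simpleL2Functional, LinearMap.mkContinuous_apply, LinearMap.coe_mk, AddHom.coe_mk,
    SimpleFunc.setToSimpleFunc_congr _ (mulCLM_eq_zero_of_measure_eq_zero hac) hadd
      (Lp.simpleFunc.integrable_toSimpleFunc two_ne_zero ENNReal.ofNat_ne_top _)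
      (Lp.simpleFunc.toSimpleFunc_indicatorConst hA hfin 1),
    SimpleFunc.setToSimpleFunc_indicator _
      (mulCLM_eq_zero_of_measure_eq_zero hac _ .empty measure_empty) hA,
    mulCLM_apply, mul_one]

theorem exists_clm_indicatorConstLp_one_eq (hadd : FinMeasAdditive μ (mulCLM M))
    (hac : ∀ A : Set X, MeasurableSet A → μ A = 0 → M A = 0) (hC : SqVariationBoundedBy μ M C) :
    ∃ Λ : Lp 𝕜 2 μ →L[𝕜] 𝕜, ∀ (A : Set X) (hA : MeasurableSet A) (hfin : μ A ≠ ⊤),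
      Λ (indicatorConstLp 2 hA hfin 1) = M A :=
  ⟨(simpleL2Functional hadd hac hC).extend (Lp.simpleFunc.coeToLp X 𝕜 𝕜), fun A hA hfin ↦ by
    have hdense : DenseRange (Lp.simpleFunc.coeToLp X 𝕜 𝕜 : Lp.simpleFunc 𝕜 2 μ → Lp 𝕜 2 μ) :=
      Lp.simpleFunc.denseRange ENNReal.ofNat_ne_top
    have hext := ContinuousLinearMap.extend_eq (simpleL2Functional hadd hac hC) hdense
      Lp.simpleFunc.isUniformInducing (Lp.simpleFunc.indicatorConst 2 hA hfin 1)
    rwa [simpleL2Functional_indicatorConst] at hext⟩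

end MeasureTheory

theorem stmt2_general {X : Type*} [MeasurableSpace X] (μ : Measure X)
    (M : Set X → ℂ)
    (hadd : ∀ A B : Set X, MeasurableSet A → MeasurableSet B → μ A < ⊤ → μ B < ⊤ →
      Disjoint A B → M (A ∪ B) = M A + M B)
    (hac : ∀ A : Set X, MeasurableSet A → μ A = 0 → M A = 0) :
    (∃ h : X → ℂ, MemLp h 2 μ ∧
        ∀ A : Set X, MeasurableSet A → μ A < ⊤ → M A = ∫ x in A, h x ∂μ) ↔
      (∃ C : ℝ, ∀ (N : ℕ) (A : Fin N → Set X),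
        (∀ n, MeasurableSet (A n)) → (∀ n, μ (A n) < ⊤) → (∀ n, 0 < μ (A n)) →
        Pairwise (Function.onFun Disjoint A) →
        ∑ n, ‖M (A n)‖ ^ 2 / (μ (A n)).toReal ≤ C) := by
  constructor
  · rintro ⟨h, hh, hM⟩
    refine ⟨‖hh.toLp h‖ ^ 2, fun N A hA hfin hpos hdisj ↦ le_of_eq_of_le ?_
      (sum_norm_setIntegral_sq_div_le hh Finset.univ hA (fun n ↦ (hfin n).ne) hpos hdisj)⟩
    exact Finset.sum_congr rfl fun n _ ↦ by rw [hM _ (hA n) (hfin n)]; rfl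
  · rintro ⟨C, hC⟩
    obtain ⟨Λ, hΛ⟩ := exists_clm_indicatorConstLp_one_eq (finMeasAdditive_mulCLM hadd) hac hC
    obtain ⟨h, hh, hΛh⟩ := exists_memLp_two_setIntegral_eq Λ
    exact ⟨h, hh, fun A hA hfin ↦ (hΛ A hA hfin.ne).symm.trans (hΛh A hA hfin.ne)⟩

/-- Main theorem (case `p = 2`): a finitely additive, absolutely continuous set function
`M` on the sets of finite measure is of the form `M(A) = ∫_A h dμ` with `h ∈ L²(μ)` iff
the sums `∑ |M(Aₙ)|²/μ(Aₙ)` over finite disjoint families are uniformly bounded. -/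
theorem stmt2 {X : Type*} [MeasurableSpace X] (μ : Measure X) [SigmaFinite μ]
    (M : Set X → ℂ)
    (hadd : ∀ A B : Set X, MeasurableSet A → MeasurableSet B → μ A < ⊤ → μ B < ⊤ →
      Disjoint A B → M (A ∪ B) = M A + M B)
    (hac : ∀ A : Set X, MeasurableSet A → μ A = 0 → M A = 0) :
    (∃ h : X → ℂ, MemLp h 2 μ ∧
        ∀ A : Set X, MeasurableSet A → μ A < ⊤ → M A = ∫ x in A, h x ∂μ) ↔
      (∃ C : ℝ, ∀ (N : ℕ) (A : Fin N → Set X),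
        (∀ n, MeasurableSet (A n)) → (∀ n, μ (A n) < ⊤) → (∀ n, 0 < μ (A n)) →
        Pairwise (Function.onFun Disjoint A) →
        ∑ n, ‖M (A n)‖ ^ 2 / (μ (A n)).toReal ≤ C) :=
  stmt2_general μ M hadd hac
end

section
/- Let (X, 𝓕) be a measurable space, μ a σ-finite measure on it, and 𝓕^fin = {A ∈ 𝓕 : μ(A) < ∞}. Let M : 𝓕^fin → ℂ be finitely additive (M(A ∪ B) = M(A) + M(B) for disjoint A, B ∈ 𝓕^fin) with M(A) = 0 whenever μ(A) = 0, and suppose there is C > 0 such that Σ_{n=1}^N |M(A_n)|² / μ(A_n) ≤ C for every finite family of pairwise disjoint sets A₁,…,A_N ∈ 𝓕^fin with μ(A_n) > 0. Then for every J ∈ ℕ, every B₁,…,B_J ∈ 𝓕^fin, and every b₁,…,b_J ∈ ℂ, one has |Σ_{j=1}^J b_j M(B_j)|² ≤ C · Σ_{i,j=1}^J b_i · conj(b_j) · μ(B_i ∩ B_j); that is, the kernel μ(A ∩ B) − M(A) · conj(M(B)) / C is positive definite on 𝓕^fin. -/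
/-!
Refine `B₁, …, B_J` into the atoms `A_S = ⋂_{j ∈ S} B_j ∩ ⋂_{j ∉ S} B_jᶜ`, `S ⊆ {1, …, J}`.
The atoms with `S ≠ ∅` are disjoint sets of finite measure, and with `c_S = ∑_{j ∈ S} b_j`
finite additivity gives `∑_j b_j M(B_j) = ∑_S c_S M(A_S)` and
`∑_{i,j} b_i conj(b_j) μ(B_i ∩ B_j) = ∑_S |c_S|² μ(A_S)`. Cauchy–Schwarz with weights `μ(A_S)`
bounds `|∑_S c_S M(A_S)|²` by `∑_S |c_S|² μ(A_S) · ∑_S |M(A_S)|² / μ(A_S)`, and the last factor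
is at most `C`; null atoms drop out because `M` vanishes on them.
-/

open MeasureTheory Finset Function

section Atoms

variable {ι X : Type*}

def atom (B : ι → Set X) (S : Finset ι) : Set X := {x | ∀ j, x ∈ B j ↔ j ∈ S}

variable {B : ι → Set X}

theorem exists_mem_atom [Fintype ι] (B : ι → Set X) (x : X) : ∃ S, x ∈ atom B S := by
  classical
  exact ⟨univ.filter (x ∈ B ·), fun j => by simp⟩

theorem pairwise_disjoint_atom (B : ι → Set X) : Pairwise (Disjoint on atom B) :=
  fun _ _ hST => Set.disjoint_left.2 fun _ hS hT =>
    hST <| Finset.ext fun j => (hS j).symm.trans (hT j)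

theorem atom_subset {S : Finset ι} {j : ι} (hj : j ∈ S) : atom B S ⊆ B j :=
  fun _ hx => (hx j).2 hj

theorem measurableSet_atom [Countable ι] [MeasurableSpace X] (hB : ∀ j, MeasurableSet (B j))
    (S : Finset ι) : MeasurableSet (atom B S) := by
  rw [atom, Set.ofPred_forall]
  refine MeasurableSet.iInter fun j => ?_
  by_cases hj : j ∈ S
  · simp only [hj, iff_true]; exact hB j
  · simp only [hj, iff_false]; exact (hB j).compl

variable [Fintype ι] [DecidableEq ι]

theorem biUnion_atom_mem (B : ι → Set X) (j : ι) :
    ⋃ S ∈ univ.filter (j ∈ ·), atom B S = B j := by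
  ext x
  obtain ⟨S, hS⟩ := exists_mem_atom B x
  simp only [Set.mem_iUnion, mem_filter, mem_univ, true_and, exists_prop]
  exact ⟨fun ⟨T, hT, hx⟩ => atom_subset hT hx, fun hx => ⟨S, (hS j).1 hx, hS⟩⟩

theorem biUnion_atom_mem_mem (B : ι → Set X) (i j : ι) :
    ⋃ S ∈ univ.filter (fun S => i ∈ S ∧ j ∈ S), atom B S = B i ∩ B j := by
  ext x
  obtain ⟨S, hS⟩ := exists_mem_atom B x
  simp only [Set.mem_iUnion, mem_filter, mem_univ, true_and, exists_prop]
  exact ⟨fun ⟨T, ⟨hi, hj⟩, hx⟩ => ⟨atom_subset hi hx, atom_subset hj hx⟩,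
    fun hx => ⟨S, ⟨(hS i).1 hx.1, (hS j).1 hx.2⟩, hS⟩⟩

end Atoms


section Algebra

variable {ι R : Type*} [Fintype ι] [DecidableEq ι] [CommSemiring R]

theorem sum_mul_sum_filter_mem (a : ι → R) (f : Finset ι → R) :
    ∑ i, a i * ∑ S with i ∈ S, f S = ∑ S, (∑ i ∈ S, a i) * f S := by
  simp_rw [sum_filter, mul_sum, sum_mul, mul_ite, mul_zero]
  rw [sum_comm]
  simp_rw [← sum_filter, filter_mem_eq_inter, univ_inter]

theorem sum_sum_mul_sum_filter_mem_mem (a d : ι → R) (f : Finset ι → R) :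
    ∑ i, ∑ j, a i * d j * ∑ S with i ∈ S ∧ j ∈ S, f S =
      ∑ S, (∑ i ∈ S, a i) * (∑ j ∈ S, d j) * f S := by
  have h : ∀ i j,
      ∑ S with i ∈ S ∧ j ∈ S, f S = ∑ S with j ∈ S, if i ∈ S then f S else 0 := by
    intro i j
    rw [sum_filter, sum_filter]
    simp_rw [← ite_and, and_comm]
  simp_rw [h, mul_assoc, ← mul_sum, sum_mul_sum_filter_mem, mul_ite, mul_zero, ← sum_filter,
    sum_mul_sum_filter_mem]

end Algebra


theorem norm_sum_mul_sq_le {κ R : Type*} [SeminormedRing R] (s : Finset κ) (c m : κ → R)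
    (w : κ → ℝ) (hw : ∀ k ∈ s, 0 ≤ w k) (hm : ∀ k ∈ s, w k = 0 → m k = 0) :
    ‖∑ k ∈ s, c k * m k‖ ^ 2 ≤ (∑ k ∈ s, ‖c k‖ ^ 2 * w k) * ∑ k ∈ s, ‖m k‖ ^ 2 / w k := by
  have hsplit : ∀ k ∈ s, ‖c k‖ * ‖m k‖ = ‖c k‖ * √(w k) * (‖m k‖ / √(w k)) := by
    intro k hk
    rcases (hw k hk).eq_or_lt with h | h
    · simp [hm k hk h.symm]
    · have := Real.sqrt_pos.2 h
      field_simp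
  calc ‖∑ k ∈ s, c k * m k‖ ^ 2 ≤ (∑ k ∈ s, ‖c k‖ * ‖m k‖) ^ 2 := by
        gcongr
        exact (norm_sum_le _ _).trans (sum_le_sum fun k _ => norm_mul_le _ _)
    _ = (∑ k ∈ s, ‖c k‖ * √(w k) * (‖m k‖ / √(w k))) ^ 2 := by rw [sum_congr rfl hsplit]
    _ ≤ (∑ k ∈ s, (‖c k‖ * √(w k)) ^ 2) * ∑ k ∈ s, (‖m k‖ / √(w k)) ^ 2 :=
        sum_mul_sq_le_sq_mul_sq _ _ _
    _ = _ := by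
        congr 1 <;> refine sum_congr rfl fun k hk => ?_
        · rw [mul_pow, Real.sq_sqrt (hw k hk)]
        · rw [div_pow, Real.sq_sqrt (hw k hk)]


section FiniteMeasureSets

variable {X : Type*} [MeasurableSpace X] (μ : Measure X)

def finiteMeasureSets : Set (Set X) := {s | MeasurableSet s ∧ μ s < ⊤}

theorem isSetRing_finiteMeasureSets : IsSetRing (finiteMeasureSets μ) where
  empty_mem := ⟨MeasurableSet.empty, by simp⟩
  union_mem _ _ hs ht := ⟨hs.1.union ht.1, measure_union_lt_top hs.2 ht.2⟩
  sdiff_mem _ _ hs ht := ⟨hs.1.diff ht.1, (measure_mono Set.sdiff_subset).trans_lt hs.2⟩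

theorem additive_biUnion_finset {G : Type*} [AddCancelCommMonoid G] {M : Set X → G}
    (hadd : ∀ A B : Set X, MeasurableSet A → MeasurableSet B → μ A < ⊤ → μ B < ⊤ →
      Disjoint A B → M (A ∪ B) = M A + M B)
    {κ : Type*} {s : Finset κ} {A : κ → Set X} (hA : ∀ k ∈ s, A k ∈ finiteMeasureSets μ)
    (hd : (s : Set κ).PairwiseDisjoint A) :
    M (⋃ k ∈ s, A k) = ∑ k ∈ s, M (A k) := by
  have hempty : M ∅ = 0 := by
    have h := hadd ∅ ∅ .empty .empty (by simp) (by simp) (Set.disjoint_empty ∅)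
    rwa [Set.union_empty, left_eq_add] at h
  let m : AddContent G (finiteMeasureSets μ) :=
    (isSetRing_finiteMeasureSets μ).addContent_of_union M hempty
      fun hs ht hst => hadd _ _ hs.1 ht.1 hs.2 ht.2 hst
  exact addContent_biUnion_eq (m := m) (isSetRing_finiteMeasureSets μ) hA hd

end FiniteMeasureSets


theorem sum_norm_sq_div_measure_le {X E : Type*} [MeasurableSpace X] [Norm E] {μ : Measure X}
    {M : Set X → E} {C : ℝ}
    (hbound : ∀ (N : ℕ) (A : Fin N → Set X),
      (∀ n, MeasurableSet (A n)) → (∀ n, μ (A n) < ⊤) → (∀ n, 0 < μ (A n)) →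
      Pairwise (Function.onFun Disjoint A) →
      ∑ n, ‖M (A n)‖ ^ 2 / (μ (A n)).toReal ≤ C)
    {κ : Type*} (s : Finset κ) (A : κ → Set X) (hA : ∀ k ∈ s, MeasurableSet (A k))
    (hfin : ∀ k ∈ s, μ (A k) < ⊤) (hd : (s : Set κ).PairwiseDisjoint A) :
    ∑ k ∈ s, ‖M (A k)‖ ^ 2 / (μ (A k)).toReal ≤ C := by
  classical
  set t := s.filter (fun k => 0 < μ (A k))
  have hst : ∑ k ∈ t, ‖M (A k)‖ ^ 2 / (μ (A k)).toReal =
      ∑ k ∈ s, ‖M (A k)‖ ^ 2 / (μ (A k)).toReal :=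
    sum_filter_of_ne fun k _ h => pos_iff_ne_zero.2 fun h0 => h (by simp [h0])
  have ht : ∀ k ∈ t, k ∈ s ∧ 0 < μ (A k) := fun k hk => mem_filter.1 hk
  let e : Fin t.card ≃ t := t.equivFin.symm
  rw [← hst, ← sum_coe_sort t, ← e.sum_comp]
  exact hbound t.card (fun n => A (e n)) (fun n => hA _ (ht _ (e n).2).1)
    (fun n => hfin _ (ht _ (e n).2).1) (fun n => (ht _ (e n).2).2)
    fun m n hmn => hd (ht _ (e m).2).1 (ht _ (e n).2).1
      fun h => hmn (e.injective (Subtype.ext h))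


section AtomsMeasure

variable {ι X : Type*} [MeasurableSpace X] {μ : Measure X} {B : ι → Set X}

theorem measure_atom_lt_top (hBfin : ∀ j, μ (B j) < ⊤) {S : Finset ι} (hS : S.Nonempty) :
    μ (atom B S) < ⊤ :=
  let ⟨j, hj⟩ := hS
  (measure_mono (atom_subset hj)).trans_lt (hBfin j)

variable [Fintype ι] [DecidableEq ι]

theorem additive_eq_sum_atom {G : Type*} [AddCancelCommMonoid G] {M : Set X → G}
    (hB : ∀ j, MeasurableSet (B j)) (hBfin : ∀ j, μ (B j) < ⊤)
    (hadd : ∀ A B : Set X, MeasurableSet A → MeasurableSet B → μ A < ⊤ → μ B < ⊤ →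
      Disjoint A B → M (A ∪ B) = M A + M B) (j : ι) :
    M (B j) = ∑ S with j ∈ S, M (atom B S) := by
  conv_lhs => rw [← biUnion_atom_mem B j]
  exact additive_biUnion_finset μ hadd
    (fun S hS => ⟨measurableSet_atom hB S, measure_atom_lt_top hBfin ⟨j, (mem_filter.1 hS).2⟩⟩)
    ((pairwise_disjoint_atom B).set_pairwise _)

theorem measure_inter_toReal_eq_sum_atom (hB : ∀ j, MeasurableSet (B j))
    (hBfin : ∀ j, μ (B j) < ⊤) (i j : ι) :
    (μ (B i ∩ B j)).toReal = ∑ S with i ∈ S ∧ j ∈ S, (μ (atom B S)).toReal := by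
  rw [← biUnion_atom_mem_mem B i j, measure_biUnion_finset
    ((pairwise_disjoint_atom B).set_pairwise _) fun S _ => measurableSet_atom hB S,
    ENNReal.toReal_sum fun S hS => (measure_atom_lt_top hBfin ⟨i, (mem_filter.1 hS).2.1⟩).ne]

end AtomsMeasure

theorem stmt4_general {X : Type*} [MeasurableSpace X] (μ : Measure X)
    (M : Set X → ℂ)
    (hadd : ∀ A B : Set X, MeasurableSet A → MeasurableSet B → μ A < ⊤ → μ B < ⊤ →
      Disjoint A B → M (A ∪ B) = M A + M B)
    (hac : ∀ A : Set X, MeasurableSet A → μ A = 0 → M A = 0)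
    (C : ℝ)
    (hbound : ∀ (N : ℕ) (A : Fin N → Set X),
      (∀ n, MeasurableSet (A n)) → (∀ n, μ (A n) < ⊤) → (∀ n, 0 < μ (A n)) →
      Pairwise (Function.onFun Disjoint A) →
      ∑ n, ‖M (A n)‖ ^ 2 / (μ (A n)).toReal ≤ C) :
    ∀ (J : ℕ) (B : Fin J → Set X), (∀ j, MeasurableSet (B j)) → (∀ j, μ (B j) < ⊤) →
      ∀ b : Fin J → ℂ,
        ‖∑ j, b j * M (B j)‖ ^ 2 ≤
          C * (∑ i, ∑ j, b i * (starRingEnd ℂ) (b j) * ((μ (B i ∩ B j)).toReal : ℂ)).re := by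
  intro J B hB hBfin b
  set c : Finset (Fin J) → ℂ := fun S => ∑ j ∈ S, b j
  set w : Finset (Fin J) → ℝ := fun S => (μ (atom B S)).toReal
  -- `atom B ∅` may have infinite measure; it is harmless since `c ∅ = 0`.
  set T : Finset (Finset (Fin J)) := univ.erase ∅
  have hfin : ∀ S ∈ T, μ (atom B S) < ⊤ := fun S hS =>
    measure_atom_lt_top hBfin (nonempty_iff_ne_empty.2 (ne_of_mem_erase hS))
  have hlhs : ∑ j, b j * M (B j) = ∑ S ∈ T, c S * M (atom B S) := by
    simp_rw [additive_eq_sum_atom hB hBfin hadd, sum_mul_sum_filter_mem]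
    exact (sum_erase _ (by simp)).symm
  have hrhs : (∑ i, ∑ j, b i * (starRingEnd ℂ) (b j) * ((μ (B i ∩ B j)).toReal : ℂ)).re =
      ∑ S ∈ T, ‖c S‖ ^ 2 * w S := by
    simp_rw [measure_inter_toReal_eq_sum_atom hB hBfin, Complex.ofReal_sum,
      sum_sum_mul_sum_filter_mem_mem, ← map_sum, Complex.mul_conj, Complex.normSq_eq_norm_sq,
      ← Complex.ofReal_mul, ← Complex.ofReal_sum, Complex.ofReal_re]
    exact (sum_erase _ (by simp)).symm
  have henergy : ∑ S ∈ T, ‖M (atom B S)‖ ^ 2 / w S ≤ C :=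
    sum_norm_sq_div_measure_le hbound T (atom B) (fun S _ => measurableSet_atom hB S) hfin
      ((pairwise_disjoint_atom B).set_pairwise _)
  have hnull : ∀ S ∈ T, w S = 0 → M (atom B S) = 0 := fun S hS h =>
    hac _ (measurableSet_atom hB S)
      (((ENNReal.toReal_eq_zero_iff _).1 h).resolve_right (hfin S hS).ne)
  rw [hlhs, hrhs, mul_comm]
  calc _ ≤ (∑ S ∈ T, ‖c S‖ ^ 2 * w S) * ∑ S ∈ T, ‖M (atom B S)‖ ^ 2 / w S :=
        norm_sum_mul_sq_le T c _ w (fun _ _ => ENNReal.toReal_nonneg) hnull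
    _ ≤ _ := mul_le_mul_of_nonneg_left henergy (sum_nonneg fun _ _ => by positivity)

/-- If a finitely additive, absolutely continuous set function `M` satisfies the bound
`∑ |M(Aₙ)|²/μ(Aₙ) ≤ C` over all finite disjoint families, then the kernel
`μ(A ∩ B) - M(A) conj(M(B)) / C` is positive definite on the sets of finite measure. -/
theorem stmt4 {X : Type*} [MeasurableSpace X] (μ : Measure X) [SigmaFinite μ]
    (M : Set X → ℂ)
    (hadd : ∀ A B : Set X, MeasurableSet A → MeasurableSet B → μ A < ⊤ → μ B < ⊤ →
      Disjoint A B → M (A ∪ B) = M A + M B)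
    (hac : ∀ A : Set X, MeasurableSet A → μ A = 0 → M A = 0)
    (C : ℝ) (hC : 0 < C)
    (hbound : ∀ (N : ℕ) (A : Fin N → Set X),
      (∀ n, MeasurableSet (A n)) → (∀ n, μ (A n) < ⊤) → (∀ n, 0 < μ (A n)) →
      Pairwise (Function.onFun Disjoint A) →
      ∑ n, ‖M (A n)‖ ^ 2 / (μ (A n)).toReal ≤ C) :
    ∀ (J : ℕ) (B : Fin J → Set X), (∀ j, MeasurableSet (B j)) → (∀ j, μ (B j) < ⊤) →
      ∀ b : Fin J → ℂ,
        ‖∑ j, b j * M (B j)‖ ^ 2 ≤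
          C * (∑ i, ∑ j, b i * (starRingEnd ℂ) (b j) * ((μ (B i ∩ B j)).toReal : ℂ)).re :=
  stmt4_general μ M hadd hac C hbound
end

section
/- Let p ∈ (1, ∞) and let f : ℝ → ℝ be a function. Then the following are equivalent: (1) there exists g ∈ L^p(ℝ, Lebesgue measure) such that f(b) − f(a) = ∫_a^b g(u) du for all real a ≤ b; (2) there exists a constant C > 0 such that for every N ∈ ℕ and every finite increasing sequence of real points x₁ < x₂ < ⋯ < x_{N+1}, one has Σ_{n=1}^N |f(x_{n+1}) − f(x_n)|^p / (x_{n+1} − x_n)^{p−1} ≤ C. -/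
/-!
If `f' = g ∈ Lᵖ`, Hölder's inequality on each cell of a partition gives
`|Δf|ᵖ / (Δx)^(p-1) ≤ ∫_cell |g|ᵖ`, and the cells are disjoint, so the sums are at most `‖g‖ₚᵖ`.

Conversely, a bound `C` on the sums over partitions also bounds the sums over any finite disjoint
family of intervals (order them and fill the gaps). Hölder's inequality then gives
`∑ |Δf| ≤ (∑ Δx)^(1-1/p) C^(1/p)`, so `f` is absolutely continuous and `f b - f a = ∫_a^b f'`.
Averaging the bound over arithmetic progressions of step `h` gives
`∫ |(f (x + h) - f x) / h|ᵖ ≤ C` over every interval, and Fatou's lemma as `h → 0⁺` gives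
`∫ |f'|ᵖ ≤ C`.
-/

open MeasureTheory Set Filter Function
open scoped ENNReal Topology

def BoundedOnPartitions (φ : ℝ → ℝ → ℝ) (C : ℝ) : Prop :=
  ∀ (N : ℕ) (x : Fin (N + 1) → ℝ), StrictMono x → ∑ n : Fin N, φ (x n.castSucc) (x n.succ) ≤ C

section PartitionSums

variable {φ : ℝ → ℝ → ℝ}

theorem sum_vecCons_castSucc_succ {N : ℕ} (a : ℝ) (x : Fin (N + 1) → ℝ) :
    ∑ n : Fin (N + 1), φ (Matrix.vecCons a x n.castSucc) (Matrix.vecCons a x n.succ) =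
      φ a (x 0) + ∑ n : Fin N, φ (x n.castSucc) (x n.succ) := by
  rw [Fin.sum_univ_succ]
  simp

theorem exists_strictMono_sum_le_of_pairwiseDisjoint {ι : Type*} [DecidableEq ι]
    (hφ : ∀ a b, a < b → 0 ≤ φ a b) {l r : ι → ℝ} (s : Finset ι) (hlr : ∀ i ∈ s, l i < r i)
    (hs : (s : Set ι).PairwiseDisjoint fun i => Ioc (l i) (r i)) {t : ℝ} (ht : ∀ i ∈ s, t ≤ l i) :
    ∃ (N : ℕ) (x : Fin (N + 1) → ℝ), StrictMono x ∧ t ≤ x 0 ∧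
      ∑ i ∈ s, φ (l i) (r i) ≤ ∑ n : Fin N, φ (x n.castSucc) (x n.succ) := by
  -- Strip off the interval with the leftmost endpoint: the others lie to the right of it, so it
  -- (and the gap up to the next point) can be prepended to a partition serving the others.
  induction s using Finset.induction_on_min_value (f := l) generalizing t with
  | empty => exact ⟨0, ![t], strictMono_vecEmpty, le_rfl, by simp⟩
  | insert j s hj hmin ih =>
    have hr : ∀ i ∈ s, r j ≤ l i := fun i hi => by
      have := Ioc_disjoint_Ioc.1 (hs (Finset.mem_insert_self j s) (Finset.mem_insert_of_mem hi)
        (ne_of_mem_of_not_mem hi hj).symm)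
      rw [max_eq_right (hmin i hi), min_le_iff] at this
      exact this.resolve_right (hlr i (Finset.mem_insert_of_mem hi)).not_ge
    obtain ⟨N, x, hx, hjx, hsum⟩ := ih (fun i hi => hlr i (Finset.mem_insert_of_mem hi))
      (hs.subset (by simp)) hr
    obtain ⟨M, y, hy, hy0, hsum'⟩ : ∃ (M : ℕ) (y : Fin (M + 1) → ℝ), StrictMono y ∧ y 0 = r j ∧
        ∑ i ∈ s, φ (l i) (r i) ≤ ∑ n : Fin M, φ (y n.castSucc) (y n.succ) := by
      rcases hjx.eq_or_lt with h | h
      · exact ⟨N, x, hx, h.symm, hsum⟩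
      · refine ⟨N + 1, Matrix.vecCons (r j) x, hx.vecCons h, rfl, ?_⟩
        rw [sum_vecCons_castSucc_succ]
        linarith [hφ (r j) (x 0) h]
    refine ⟨M + 1, Matrix.vecCons (l j) y, hy.vecCons (hy0 ▸ hlr j (Finset.mem_insert_self j s)),
      ht j (Finset.mem_insert_self j s), ?_⟩
    rw [Finset.sum_insert hj, sum_vecCons_castSucc_succ, hy0]
    linarith

theorem BoundedOnPartitions.sum_le_of_pairwiseDisjoint {C : ℝ} (hC : BoundedOnPartitions φ C)
    (hφ : ∀ a b, a < b → 0 ≤ φ a b) {ι : Type*} {l r : ι → ℝ} (s : Finset ι)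
    (hlr : ∀ i ∈ s, l i < r i)
    (hs : (s : Set ι).PairwiseDisjoint fun i => Ioc (l i) (r i)) :
    ∑ i ∈ s, φ (l i) (r i) ≤ C := by
  classical
  obtain ⟨t, ht⟩ := (s.image l).bddBelow
  obtain ⟨N, x, hx, -, hsum⟩ := exists_strictMono_sum_le_of_pairwiseDisjoint hφ s hlr hs
    (t := t) fun i hi => ht (Finset.mem_image_of_mem l hi)
  exact hsum.trans (hC N x hx)

end PartitionSums

theorem Finset.sum_abs_le_rpow_mul_rpow {ι : Type*} (s : Finset ι) {p : ℝ} (hp : 1 ≤ p)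
    (u v : ι → ℝ) (hv : ∀ i ∈ s, 0 < v i) :
    ∑ i ∈ s, |u i| ≤
      (∑ i ∈ s, v i) ^ (1 - p⁻¹) * (∑ i ∈ s, |u i| ^ p / v i ^ (p - 1)) ^ p⁻¹ := by
  have key := Real.inner_le_weight_mul_Lp_of_nonneg s hp (fun i => |v i|) (fun i => |u i| / |v i|)
    (fun i => abs_nonneg _) (fun i => by positivity)
  have hw : ∀ i ∈ s, |v i| = v i := fun i hi => abs_of_pos (hv i hi)
  have h1 : ∀ i ∈ s, |v i| * (|u i| / |v i|) = |u i| := fun i hi =>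
    mul_div_cancel₀ _ (abs_pos.2 (hv i hi).ne').ne'
  have h2 : ∀ i ∈ s, |v i| * (|u i| / |v i|) ^ p = |u i| ^ p / v i ^ (p - 1) := fun i hi => by
    rw [hw i hi, Real.div_rpow (abs_nonneg _) (hv i hi).le, Real.rpow_sub_one (hv i hi).ne']
    field_simp
  rwa [Finset.sum_congr rfl h1, Finset.sum_congr rfl h2, Finset.sum_congr rfl hw] at key

theorem setLIntegral_enorm_deriv_rpow_le {f : ℝ → ℝ} {p : ℝ} {s : Set ℝ} {M : ℝ≥0∞}
    (hf : Measurable f) (hdiff : ∀ᵐ x, DifferentiableAt ℝ f x)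
    (hslope : ∀ h > 0, ∫⁻ x in s, ‖h⁻¹ * (f (x + h) - f x)‖ₑ ^ p ≤ M) :
    ∫⁻ x in s, ‖deriv f x‖ₑ ^ p ≤ M := by
  have hlim : ∀ᵐ x ∂volume.restrict s, Tendsto (fun h => ‖h⁻¹ * (f (x + h) - f x)‖ₑ ^ p)
      (𝓝[>] 0) (𝓝 (‖deriv f x‖ₑ ^ p)) :=
    ae_restrict_of_ae <| hdiff.mono fun x hx =>
      ((ENNReal.continuous_rpow_const.comp continuous_enorm).tendsto _).comp
        hx.hasDerivAt.tendsto_slope_zero_right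
  calc ∫⁻ x in s, ‖deriv f x‖ₑ ^ p
      = ∫⁻ x in s, liminf (fun h => ‖h⁻¹ * (f (x + h) - f x)‖ₑ ^ p) (𝓝[>] 0) :=
        lintegral_congr_ae (hlim.mono fun x hx => hx.liminf_eq.symm)
    _ ≤ liminf (fun h => ∫⁻ x in s, ‖h⁻¹ * (f (x + h) - f x)‖ₑ ^ p) (𝓝[>] 0) :=
        lintegral_liminf_le' fun h => by fun_prop
    _ ≤ M :=
        liminf_le_of_frequently_le' (eventually_nhdsWithin_of_forall (s := Ioi 0) hslope).frequently

theorem memLp_of_forall_setLIntegral_Ioc_le {E : Type*} [NormedAddCommGroup E] {g : ℝ → E}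
    {p : ℝ} (hp : 0 < p) (hg : AEStronglyMeasurable g) {M : ℝ≥0∞} (hM : M ≠ ∞)
    (h : ∀ a b, ∫⁻ x in Ioc a b, ‖g x‖ₑ ^ p ≤ M) :
    MemLp g (ENNReal.ofReal p) volume := by
  have hU : ⋃ n : ℕ, Ioc (-(n : ℝ)) n = univ := eq_univ_of_forall fun x => by
    obtain ⟨n, hn⟩ := exists_nat_gt |x|
    exact mem_iUnion.2 ⟨n, by linarith [neg_abs_le x], by linarith [le_abs_self x]⟩
  have hmono : Monotone fun n : ℕ => Ioc (-(n : ℝ)) n := fun m n hmn =>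
    Ioc_subset_Ioc (by simpa using hmn) (by simpa using hmn)
  have hle : ∫⁻ x, ‖g x‖ₑ ^ p ≤ M := by
    rw [← setLIntegral_univ, ← hU, setLIntegral_iUnion_of_directed _ hmono.directed_le]
    exact iSup_le fun n => h _ _
  refine ⟨hg, (eLpNorm_lt_top_iff_lintegral_rpow_enorm_lt_top (by simpa using hp)
    ENNReal.ofReal_ne_top).2 ?_⟩
  rw [ENNReal.toReal_ofReal hp.le]
  exact hle.trans_lt hM.lt_top

noncomputable def rieszQuotient (p : ℝ) (f : ℝ → ℝ) (a b : ℝ) : ℝ :=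
  |f b - f a| ^ p / (b - a) ^ (p - 1)

theorem rieszQuotient_nonneg (p : ℝ) (f : ℝ → ℝ) {a b : ℝ} (hab : a ≤ b) :
    0 ≤ rieszQuotient p f a b :=
  div_nonneg (by positivity) (Real.rpow_nonneg (sub_nonneg.2 hab) _)

section Riesz

variable {p C : ℝ} {f : ℝ → ℝ}

theorem BoundedOnPartitions.sum_dist_le (hp : 1 < p)
    (hf : BoundedOnPartitions (rieszQuotient p f) C) (s : Finset ℕ) {I : ℕ → ℝ × ℝ}
    (hI : (s : Set ℕ).PairwiseDisjoint fun i => uIoc (I i).1 (I i).2) :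
    ∑ i ∈ s, dist (f (I i).1) (f (I i).2) ≤
      (∑ i ∈ s, dist (I i).1 (I i).2) ^ (1 - p⁻¹) * C ^ p⁻¹ := by
  set l : ℕ → ℝ := fun i => min (I i).1 (I i).2
  set r : ℕ → ℝ := fun i => max (I i).1 (I i).2
  have hf_dist : ∀ i, dist (f (I i).1) (f (I i).2) = |f (r i) - f (l i)| := fun i => by
    rcases le_total (I i).1 (I i).2 with h | h <;> simp [l, r, h, Real.dist_eq, abs_sub_comm]
  have hdist : ∀ i, dist (I i).1 (I i).2 = r i - l i := fun i => by
    rw [Real.dist_eq, max_sub_min_eq_abs']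
  set t := s.filter fun i => l i < r i
  have hsum : ∑ i ∈ t, |f (r i) - f (l i)| = ∑ i ∈ s, dist (f (I i).1) (f (I i).2) := by
    rw [Finset.sum_filter_of_ne fun i _ hi => lt_of_le_of_ne min_le_max fun h : l i = r i =>
      hi (by rw [h, sub_self, abs_zero])]
    exact Finset.sum_congr rfl fun i _ => (hf_dist i).symm
  have hpos : ∀ i ∈ t, l i < r i := fun i hi => (Finset.mem_filter.1 hi).2
  calc ∑ i ∈ s, dist (f (I i).1) (f (I i).2)
      = ∑ i ∈ t, |f (r i) - f (l i)| := hsum.symm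
    _ ≤ (∑ i ∈ t, (r i - l i)) ^ (1 - p⁻¹) * (∑ i ∈ t, rieszQuotient p f (l i) (r i)) ^ p⁻¹ :=
        t.sum_abs_le_rpow_mul_rpow hp.le _ _ fun i hi => sub_pos.2 (hpos i hi)
    _ ≤ (∑ i ∈ s, dist (I i).1 (I i).2) ^ (1 - p⁻¹) * C ^ p⁻¹ := by
        have hlen : ∑ i ∈ t, (r i - l i) ≤ ∑ i ∈ s, dist (I i).1 (I i).2 := by
          simp_rw [hdist]
          exact Finset.sum_le_sum_of_subset_of_nonneg (Finset.filter_subset _ _)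
            fun i _ _ => sub_nonneg.2 min_le_max
        have hC : ∑ i ∈ t, rieszQuotient p f (l i) (r i) ≤ C :=
          hf.sum_le_of_pairwiseDisjoint (fun a b hab => rieszQuotient_nonneg p f hab.le) t
            hpos
            (hI.subset (Finset.coe_subset.2 (Finset.filter_subset _ _)))
        have hp' : 0 ≤ 1 - p⁻¹ := sub_nonneg.2 (inv_le_one_of_one_le₀ hp.le)
        have h0 : 0 ≤ ∑ i ∈ t, (r i - l i) :=
          Finset.sum_nonneg fun i hi => (sub_pos.2 (hpos i hi)).le
        have h0' : 0 ≤ ∑ i ∈ t, rieszQuotient p f (l i) (r i) :=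
          Finset.sum_nonneg fun i hi => rieszQuotient_nonneg p f (hpos i hi).le
        gcongr

theorem BoundedOnPartitions.absolutelyContinuousOnInterval (hp : 1 < p)
    (hf : BoundedOnPartitions (rieszQuotient p f) C) (a b : ℝ) :
    AbsolutelyContinuousOnInterval f a b := by
  open AbsolutelyContinuousOnInterval in
  have hlen : Tendsto (fun E : ℕ × (ℕ → ℝ × ℝ) => ∑ i ∈ Finset.range E.1, dist (E.2 i).1 (E.2 i).2)
      (totalLengthFilter ⊓ 𝓟 (disjWithin a b)) (𝓝 0) :=
    tendsto_comap.mono_left inf_le_left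
  have hexp : 0 < 1 - p⁻¹ := sub_pos.2 (inv_lt_one_of_one_lt₀ hp)
  have hbound := ((Real.continuousAt_rpow_const 0 _ (Or.inr hexp.le)).tendsto.comp hlen).mul_const
    (C ^ p⁻¹)
  rw [Real.zero_rpow hexp.ne', zero_mul] at hbound
  refine squeeze_zero' (Eventually.of_forall fun E => Finset.sum_nonneg fun _ _ => dist_nonneg)
    (eventually_inf_principal.2 (.of_forall fun E hE => hf.sum_dist_le hp _ hE.2)) hbound

theorem BoundedOnPartitions.sum_range_rpow_abs_sub_le
    (hf : BoundedOnPartitions (rieszQuotient p f) C) {h : ℝ} (hh : 0 < h) (t : ℝ) (K : ℕ) :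
    ∑ k ∈ Finset.range K, |f (t + k * h + h) - f (t + k * h)| ^ p ≤ C * h ^ (p - 1) := by
  have hx : StrictMono fun k : Fin (K + 1) => t + ((k : ℕ) : ℝ) * h := fun i j hij => by
    simp only
    gcongr
    exact_mod_cast hij
  have hterm : ∀ n : Fin K, rieszQuotient p f (t + ((n.castSucc : ℕ) : ℝ) * h)
      (t + ((n.succ : ℕ) : ℝ) * h) = |f (t + n * h + h) - f (t + n * h)| ^ p / h ^ (p - 1) := by
    intro n
    simp only [rieszQuotient, Fin.val_succ, Fin.val_castSucc, Nat.cast_add, Nat.cast_one]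
    ring_nf
  have := hf K _ hx
  rwa [Finset.sum_congr rfl fun n _ => hterm n,
    Fin.sum_univ_eq_sum_range (fun k => |f (t + k * h + h) - f (t + k * h)| ^ p / h ^ (p - 1)),
    ← Finset.sum_div, div_le_iff₀ (by positivity)] at this

theorem BoundedOnPartitions.intervalIntegral_rpow_abs_sub_le (hp : 0 ≤ p) (hfc : Continuous f)
    (hf : BoundedOnPartitions (rieszQuotient p f) C) {h : ℝ} (hh : 0 < h) (a : ℝ) (K : ℕ) :
    ∫ x in a..a + K * h, |f (x + h) - f x| ^ p ≤ C * h ^ p := by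
  set G : ℝ → ℝ := fun x => |f (x + h) - f x| ^ p
  have hG : Continuous G := by fun_prop (disch := exact fun _ => Or.inr hp)
  calc ∫ x in a..a + K * h, G x
      = ∑ k ∈ Finset.range K, ∫ x in a + k * h..a + (k + 1 : ℕ) * h, G x := by
        rw [intervalIntegral.sum_integral_adjacent_intervals fun k _ => hG.intervalIntegrable _ _]
        simp
    _ = ∑ k ∈ Finset.range K, ∫ t in a..a + h, G (t + k * h) := by
        refine Finset.sum_congr rfl fun k _ => ?_
        rw [intervalIntegral.integral_comp_add_right]
        congr 1
        push_cast
        ring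
    _ = ∫ t in a..a + h, ∑ k ∈ Finset.range K, G (t + k * h) :=
        (intervalIntegral.integral_finsetSum fun k _ =>
          (hG.comp (by fun_prop)).intervalIntegrable _ _).symm
    _ ≤ ∫ t in a..a + h, C * h ^ (p - 1) :=
        intervalIntegral.integral_mono_on (by linarith)
          ((continuous_finsetSum _ fun k _ => hG.comp (by fun_prop)).intervalIntegrable _ _)
          intervalIntegrable_const
          fun t _ => hf.sum_range_rpow_abs_sub_le hh t K
    _ = C * h ^ p := by
        rw [intervalIntegral.integral_const, smul_eq_mul, add_sub_cancel_left,
          Real.rpow_sub_one hh.ne']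
        field_simp

theorem BoundedOnPartitions.setLIntegral_slope_rpow_le (hp : 0 ≤ p) (hfc : Continuous f)
    (hf : BoundedOnPartitions (rieszQuotient p f) C) {h : ℝ} (hh : 0 < h) (a b : ℝ) :
    ∫⁻ x in Ioc a b, ‖h⁻¹ * (f (x + h) - f x)‖ₑ ^ p ≤ ENNReal.ofReal C := by
  obtain ⟨K, hK⟩ : ∃ K : ℕ, b ≤ a + K * h := by
    obtain ⟨K, hK⟩ := exists_nat_ge ((b - a) / h)
    exact ⟨K, by rw [div_le_iff₀ hh] at hK; linarith⟩
  have hnorm : ∀ x, ‖h⁻¹ * (f (x + h) - f x)‖ₑ ^ p =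
      ENNReal.ofReal ((h ^ p)⁻¹ * |f (x + h) - f x| ^ p) := fun x => by
    rw [Real.enorm_eq_ofReal_abs, ENNReal.ofReal_rpow_of_nonneg (abs_nonneg _) hp, abs_mul,
      Real.mul_rpow (abs_nonneg _) (abs_nonneg _), abs_inv, abs_of_pos hh,
      Real.inv_rpow hh.le]
  have hint : IntegrableOn (fun x => (h ^ p)⁻¹ * |f (x + h) - f x| ^ p) (Ioc a (a + K * h)) :=
    Continuous.integrableOn_Ioc (by fun_prop (disch := exact fun _ => Or.inr hp))
  calc ∫⁻ x in Ioc a b, ‖h⁻¹ * (f (x + h) - f x)‖ₑ ^ p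
      ≤ ∫⁻ x in Ioc a (a + K * h), ‖h⁻¹ * (f (x + h) - f x)‖ₑ ^ p :=
        lintegral_mono_set (Ioc_subset_Ioc_right hK)
    _ = ENNReal.ofReal (∫ x in a..a + K * h, (h ^ p)⁻¹ * |f (x + h) - f x| ^ p) := by
        rw [intervalIntegral.integral_of_le (le_add_of_nonneg_right (by positivity)),
          ofReal_integral_eq_lintegral_ofReal hint (.of_forall fun x => by positivity)]
        simp_rw [hnorm]
    _ ≤ ENNReal.ofReal C := by
        refine ENNReal.ofReal_le_ofReal ?_
        rw [intervalIntegral.integral_const_mul, inv_mul_le_iff₀ (by positivity), mul_comm (h ^ p)]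
        exact hf.intervalIntegral_rpow_abs_sub_le hp hfc hh a K

theorem BoundedOnPartitions.memLp_deriv (hp : 1 < p)
    (hf : BoundedOnPartitions (rieszQuotient p f) C) :
    MemLp (deriv f) (ENNReal.ofReal p) volume := by
  have hac := hf.absolutelyContinuousOnInterval hp
  have hfc : Continuous f := continuous_iff_continuousAt.2 fun x =>
    (hac (x - 1) (x + 1)).continuousOn.continuousAt <| by
      rw [uIcc_of_le (by linarith)]
      exact Icc_mem_nhds (by linarith) (by linarith)
  have hdiff : ∀ᵐ x, DifferentiableAt ℝ f x :=
    LocallyBoundedVariationOn.ae_differentiableAt fun a b _ _ => by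
      simpa only [univ_inter] using (hac a b).boundedVariationOn.mono Icc_subset_uIcc
  exact memLp_of_forall_setLIntegral_Ioc_le (by linarith) (measurable_deriv f).aestronglyMeasurable
    ENNReal.ofReal_ne_top fun a b => setLIntegral_enorm_deriv_rpow_le hfc.measurable hdiff
      fun h hh => hf.setLIntegral_slope_rpow_le (by linarith) hfc hh a b

theorem rpow_abs_intervalIntegral_div_le {g : ℝ → ℝ} (hp : 1 < p) {u v : ℝ} (huv : u < v)
    (hg : MemLp g (ENNReal.ofReal p) (volume.restrict (Ioc u v))) :
    |∫ x in u..v, g x| ^ p / (v - u) ^ (p - 1) ≤ ∫ x in Ioc u v, |g x| ^ p := by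
  have hpq := Real.HolderConjugate.conjExponent hp
  have : IsFiniteMeasure (volume.restrict (Ioc u v)) :=
    isFiniteMeasure_restrict.2 measure_Ioc_lt_top.ne
  have hholder := integral_mul_le_Lp_mul_Lq_of_nonneg hpq (μ := volume.restrict (Ioc u v))
    (f := fun x => |g x|) (g := fun _ => 1) (.of_forall fun _ => abs_nonneg _)
    (.of_forall fun _ => zero_le_one) hg.abs (memLp_const 1)
  simp only [mul_one, one_div, Real.one_rpow, integral_const, MeasurableSet.univ,
    measureReal_restrict_apply, univ_inter, Real.volume_real_Ioc, smul_eq_mul] at hholder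
  rw [max_eq_left (sub_nonneg.2 huv.le)] at hholder
  have habs : |∫ x in u..v, g x| ≤ ∫ x in Ioc u v, |g x| := by
    rw [intervalIntegral.integral_of_le huv.le]
    exact abs_integral_le_integral_abs
  have hA : 0 ≤ ∫ x in Ioc u v, |g x| ^ p :=
    setIntegral_nonneg measurableSet_Ioc fun _ _ => by positivity
  have huv' : 0 < v - u := sub_pos.2 huv
  rw [div_le_iff₀ (by positivity)]
  calc |∫ x in u..v, g x| ^ p
      ≤ ((∫ x in Ioc u v, |g x| ^ p) ^ p⁻¹ * (v - u) ^ p.conjExponent⁻¹) ^ p :=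
        Real.rpow_le_rpow (abs_nonneg _) (habs.trans hholder) (by linarith)
    _ = (∫ x in Ioc u v, |g x| ^ p) * (v - u) ^ (p - 1) := by
        rw [Real.mul_rpow (by positivity) (by positivity), ← Real.rpow_mul hA,
          ← Real.rpow_mul huv'.le, inv_mul_cancel₀ (by linarith), Real.rpow_one, inv_mul_eq_div,
          hpq.div_conj_eq_sub_one]

theorem boundedOnPartitions_rieszQuotient_of_eq_integral {g : ℝ → ℝ} (hp : 1 < p)
    (hg : MemLp g (ENNReal.ofReal p) volume) (hfg : ∀ a b, a ≤ b → f b - f a = ∫ u in a..b, g u) :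
    BoundedOnPartitions (rieszQuotient p f) (∫ x, |g x| ^ p) := by
  intro N x hx
  have hdisj : Pairwise (Disjoint on fun n : Fin N => Ioc (x n.castSucc) (x n.succ)) :=
    (pairwise_disjoint_on _).2 fun m n hmn =>
      Ioc_disjoint_Ioc_of_le (hx.monotone (Fin.succ_le_castSucc_iff.2 hmn))
  have hint : Integrable fun y => |g y| ^ p := by
    simpa [ENNReal.toReal_ofReal (by linarith : 0 ≤ p)] using
      hg.integrable_norm_rpow (ENNReal.ofReal_pos.2 (by linarith)).ne' ENNReal.ofReal_ne_top
  calc ∑ n : Fin N, rieszQuotient p f (x n.castSucc) (x n.succ)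
      ≤ ∑ n : Fin N, ∫ y in Ioc (x n.castSucc) (x n.succ), |g y| ^ p :=
        Finset.sum_le_sum fun n _ => by
          rw [rieszQuotient, hfg _ _ (hx Fin.castSucc_lt_succ).le]
          exact rpow_abs_intervalIntegral_div_le hp (hx Fin.castSucc_lt_succ) (hg.restrict _)
    _ = ∫ y in ⋃ n : Fin N, Ioc (x n.castSucc) (x n.succ), |g y| ^ p :=
        (integral_iUnion_fintype (fun _ => measurableSet_Ioc) hdisj fun _ => hint.integrableOn).symm
    _ ≤ ∫ y, |g y| ^ p := setIntegral_le_integral hint (.of_forall fun _ => by positivity)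

end Riesz

/-- A function `f : ℝ → ℝ` is of the form `f(b) - f(a) = ∫_a^b g(u) du` with
`g ∈ Lᵖ(ℝ)`, `1 < p < ∞`, iff the sums `∑ |f(xₙ₊₁) - f(xₙ)|ᵖ/(xₙ₊₁ - xₙ)^(p-1)` over
finite increasing sequences of points are uniformly bounded. -/
theorem stmt7 (p : ℝ) (hp : 1 < p) (f : ℝ → ℝ) :
    (∃ g : ℝ → ℝ, MemLp g (ENNReal.ofReal p) (volume : Measure ℝ) ∧
        ∀ a b : ℝ, a ≤ b → f b - f a = ∫ u in a..b, g u) ↔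
      (∃ C : ℝ, 0 < C ∧ ∀ (N : ℕ) (x : Fin (N + 1) → ℝ), StrictMono x →
        ∑ n : Fin N, |f (x n.succ) - f (x n.castSucc)| ^ p
            / (x n.succ - x n.castSucc) ^ (p - 1) ≤ C) := by
  constructor
  · rintro ⟨g, hg, hfg⟩
    have hC := boundedOnPartitions_rieszQuotient_of_eq_integral hp hg hfg
    exact ⟨(∫ x, |g x| ^ p) + 1, by positivity, fun N x hx => (hC N x hx).trans (by linarith)⟩
  · rintro ⟨C, -, hC⟩
    have hC : BoundedOnPartitions (rieszQuotient p f) C := hC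
    exact ⟨deriv f, hC.memLp_deriv hp, fun a b _ =>
      ((hC.absolutelyContinuousOnInterval hp a b).integral_deriv_eq_sub).symm⟩
end

section
/- Let (X, 𝓕) be a measurable space and let μ₁, μ₂ be σ-finite measures on it. Put ν = μ₁ + μ₂ and let f₁ = dμ₁/dν and f₂ = dμ₂/dν be the Radon–Nikodym derivatives. Then μ₁ and μ₂ are mutually singular if and only if ∫_X √(f₁(x) · f₂(x)) dν(x) = 0. -/
open MeasureTheory
open scoped ENNReal

/-- Two sigma-finite measures `μ₁, μ₂` are mutually singular iff
`∫ √(f₁ f₂) dν = 0`, where `ν = μ₁ + μ₂` and `fᵢ = dμᵢ/dν`. -/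
theorem stmt12 {X : Type*} [MeasurableSpace X] (μ₁ μ₂ : Measure X)
    [SigmaFinite μ₁] [SigmaFinite μ₂] :
    μ₁.MutuallySingular μ₂ ↔
      ∫⁻ x, (μ₁.rnDeriv (μ₁ + μ₂) x * μ₂.rnDeriv (μ₁ + μ₂) x) ^ (1 / 2 : ℝ)
          ∂(μ₁ + μ₂) = 0 := by
  set ν := μ₁ + μ₂ with hν
  have hac₁ : μ₁ ≪ ν := Measure.absolutelyContinuous_of_le (Measure.le_add_right le_rfl)
  have hac₂ : μ₂ ≪ ν := Measure.absolutelyContinuous_of_le (Measure.le_add_left le_rfl)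
  have hm₁ := Measure.measurable_rnDeriv μ₁ ν
  have hm₂ := Measure.measurable_rnDeriv μ₂ ν
  have hmeas : Measurable fun x =>
      (μ₁.rnDeriv ν x * μ₂.rnDeriv ν x) ^ (1 / 2 : ℝ) :=
    (hm₁.mul hm₂).pow_const _
  rw [lintegral_eq_zero_iff hmeas]
  have key : (∀ᵐ x ∂ν, (μ₁.rnDeriv ν x * μ₂.rnDeriv ν x) ^ (1 / 2 : ℝ) = 0) ↔
      (∀ᵐ x ∂ν, μ₁.rnDeriv ν x * μ₂.rnDeriv ν x = 0) := by
    refine ⟨fun h => ?_, fun h => ?_⟩ <;> filter_upwards [h] with x hx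
    · rw [ENNReal.rpow_eq_zero_iff] at hx
      rcases hx with ⟨h0, _⟩ | ⟨_, hneg⟩
      · exact h0
      · norm_num at hneg
    · rw [hx]
      simp [ENNReal.zero_rpow_of_pos]
  rw [show ((fun x => (μ₁.rnDeriv ν x * μ₂.rnDeriv ν x) ^ (1 / 2 : ℝ)) =ᵐ[ν] 0) ↔
      ∀ᵐ x ∂ν, (μ₁.rnDeriv ν x * μ₂.rnDeriv ν x) ^ (1 / 2 : ℝ) = 0 from Iff.rfl, key]
  constructor
  · rintro ⟨s, hs, hμ₁s, hμ₂sc⟩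
    have h1 : ∀ᵐ x ∂ν.restrict s, μ₁.rnDeriv ν x = 0 := by
      have := Measure.setLIntegral_rnDeriv' hac₁ hs
      rw [hμ₁s] at this
      exact (lintegral_eq_zero_iff hm₁).mp this
    have h2 : ∀ᵐ x ∂ν.restrict sᶜ, μ₂.rnDeriv ν x = 0 := by
      have := Measure.setLIntegral_rnDeriv' hac₂ hs.compl
      rw [hμ₂sc] at this
      exact (lintegral_eq_zero_iff hm₂).mp this
    have h1' : ∀ᵐ x ∂ν, x ∈ s → μ₁.rnDeriv ν x = 0 :=
      (ae_restrict_iff' hs).mp h1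
    have h2' : ∀ᵐ x ∂ν, x ∈ sᶜ → μ₂.rnDeriv ν x = 0 :=
      (ae_restrict_iff' hs.compl).mp h2
    filter_upwards [h1', h2'] with x hx1 hx2
    by_cases hxs : x ∈ s
    · rw [hx1 hxs, zero_mul]
    · rw [hx2 hxs, mul_zero]
  · intro h
    set S := {x | μ₁.rnDeriv ν x = 0} with hS
    have hSm : MeasurableSet S := hm₁ (measurableSet_singleton 0)
    refine ⟨S, hSm, ?_, ?_⟩
    · rw [← Measure.setLIntegral_rnDeriv' hac₁ hSm]
      rw [setLIntegral_eq_zero_iff hSm hm₁]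
      exact ae_of_all _ fun x hx => hx
    · rw [← Measure.setLIntegral_rnDeriv' hac₂ hSm.compl]
      rw [setLIntegral_eq_zero_iff hSm.compl hm₂]
      filter_upwards [h] with x hx hxS
      have : μ₁.rnDeriv ν x ≠ 0 := hxS
      exact (mul_eq_zero.mp hx).resolve_left this
end

section
/- Let (X, 𝓕) be а measurable space, ν a σ-finite measure on it, (Ω, 𝓒, ℙ) a probability space, and V : L²(X, ν; ℝ) → L²(Ω, ℙ; ℝ) a linear isometry. Let μ be a σ-finite measure on (X, 𝓕) with μ ≪ ν, and for each A ∈ 𝓕 with μ(A) < ∞ set W^{(μ)}_A := V(1_A · √(dμ/dν)) (the function 1_A · √(dμ/dν) lies in L²(X, ν) since ∫_A (dμ/dν) dν = μ(A) < ∞). Then E[W^{(μ)}_A · W^{(μ)}_B] = μ(A ∩ B) for all A, B ∈ 𝓕 with μ(A) < ∞ and μ(B) < ∞; that is, W^{(μ)} is a μ-Brownian motion. -/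
open MeasureTheory

namespace MeasureTheory.L2

variable {α β : Type*} [MeasurableSpace α] [MeasurableSpace β] {μ : Measure α} {ν : Measure β}

theorem integral_mul_eq_inner (f g : Lp ℝ 2 μ) : ∫ x, f x * g x ∂μ = inner ℝ f g := by
  simp only [inner_def, RCLike.inner_apply, conj_trivial, mul_comm]

theorem integral_mul_linearIsometry (V : Lp ℝ 2 μ →ₗᵢ[ℝ] Lp ℝ 2 ν) (f g : Lp ℝ 2 μ) :
    ∫ y, V f y * V g y ∂ν = ∫ x, f x * g x ∂μ := by
  rw [integral_mul_eq_inner, integral_mul_eq_inner, V.inner_map_map]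

end MeasureTheory.L2

lemma Set.indicator_sqrt_mul_indicator_sqrt {ι : Type*} {f : ι → ℝ} (hf : 0 ≤ f)
    (s t : Set ι) (i : ι) : s.indicator (fun j ↦ √(f j)) i * t.indicator (fun j ↦ √(f j)) i =
      (s ∩ t).indicator f i := by
  rw [← Set.inter_indicator_mul]
  simp only [Real.mul_self_sqrt (hf _)]

theorem MeasureTheory.Measure.integral_indicator_sqrt_rnDeriv_mul {X : Type*} [MeasurableSpace X]
    {μ ν : Measure X} [SigmaFinite μ] [SigmaFinite ν] (hμν : μ ≪ ν) {A B : Set X}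
    (hA : MeasurableSet A) (hB : MeasurableSet B) :
    ∫ x, A.indicator (fun x ↦ √(μ.rnDeriv ν x).toReal) x *
      B.indicator (fun x ↦ √(μ.rnDeriv ν x).toReal) x ∂ν = μ.real (A ∩ B) := by
  simp only [Set.indicator_sqrt_mul_indicator_sqrt (fun _ ↦ ENNReal.toReal_nonneg)]
  rw [integral_indicator (hA.inter hB), Measure.setIntegral_toReal_rnDeriv hμν]

theorem stmt14_general {X : Type*} [MeasurableSpace X] (ν : Measure X) [SigmaFinite ν]
    {Ω : Type*} [MeasurableSpace Ω] (P : Measure Ω)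
    (V : Lp ℝ 2 ν →ₗᵢ[ℝ] Lp ℝ 2 P)
    (μ : Measure X) [SigmaFinite μ] (hac : μ ≪ ν)
    (A B : Set X) (hA : MeasurableSet A) (hB : MeasurableSet B)
    (gA gB : Lp ℝ 2 ν)
    (hgA : (gA : X → ℝ) =ᵐ[ν] A.indicator fun x => Real.sqrt ((μ.rnDeriv ν x).toReal))
    (hgB : (gB : X → ℝ) =ᵐ[ν] B.indicator fun x => Real.sqrt ((μ.rnDeriv ν x).toReal)) :
    ∫ ω, V gA ω * V gB ω ∂P = (μ (A ∩ B)).toReal := by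
  rw [L2.integral_mul_linearIsometry, ← measureReal_def,
    ← Measure.integral_indicator_sqrt_rnDeriv_mul hac hA hB]
  exact integral_congr_ae (hgA.mul hgB)

/-- If `V : L²(X, ν) → L²(Ω, P)` is a linear isometry and `μ ≪ ν`, then
`W^{(μ)}_A := V(1_A √(dμ/dν))` has covariance `E[W^{(μ)}_A W^{(μ)}_B] = μ(A ∩ B)`,
i.e. `W^{(μ)}` is a `μ`-Brownian motion. -/
theorem stmt14 {X : Type*} [MeasurableSpace X] (ν : Measure X) [SigmaFinite ν]
    {Ω : Type*} [MeasurableSpace Ω] (P : Measure Ω) [IsProbabilityMeasure P]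
    (V : Lp ℝ 2 ν →ₗᵢ[ℝ] Lp ℝ 2 P)
    (μ : Measure X) [SigmaFinite μ] (hac : μ ≪ ν)
    (A B : Set X) (hA : MeasurableSet A) (hB : MeasurableSet B)
    (hμA : μ A < ⊤) (hμB : μ B < ⊤)
    (gA gB : Lp ℝ 2 ν)
    (hgA : (gA : X → ℝ) =ᵐ[ν] A.indicator fun x => Real.sqrt ((μ.rnDeriv ν x).toReal))
    (hgB : (gB : X → ℝ) =ᵐ[ν] B.indicator fun x => Real.sqrt ((μ.rnDeriv ν x).toReal)) :
    ∫ ω, V gA ω * V gB ω ∂P = (μ (A ∩ B)).toReal :=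
  stmt14_general ν P V μ hac A B hA hB gA gB hgA hgB
end
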